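/- The spin flip rate c_i(σ) = exp(-β Σ_{B∋i} J_B χ_B(σ)) admits the decomposition c_i(σ) = M_i [λ_i(0)·(1/2) + Σ_{k=1}^∞ λ_i(k) p_i^{[k]}(-σ(i)|σ)], where M_i = 2 exp(β Σ_{B∋i} |J_B|), the λ_i(k) are as defined, and p_i^{[k]}(-σ(i)|σ) are the specified update probabilities depending only on σ restricted to B_i(k). -/

import Mathlib

open Real

noncomputable section

/-- The `L¹` ball of radius `k` around `i` in `ℤ^d`, as a finite set. -/
def ball {d : ℕ} (i : Fin d → ℤ) (k : ℕ) : Finset (Fin d → ℤ) :=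
  (Finset.Icc (fun t => i t - (k : ℤ)) (fun t => i t + (k : ℤ))).filter
    (fun j => (∑ t, |j t - i t|) ≤ (k : ℤ))

/-- `Σ_{B ∋ i} |J_B|`. -/
def totalJ {d : ℕ} (J : Finset (Fin d → ℤ) → ℝ) (i : Fin d → ℤ) : ℝ :=
  ∑' B : Finset (Fin d → ℤ), if i ∈ B then |J B| else 0

/-- `S_i^{>k} = Σ_{B ∋ i, B ⊄ B_i(k)} |J_B|`. -/
def tailJ {d : ℕ} (J : Finset (Fin d → ℤ) → ℝ) (i : Fin d → ℤ) (k : ℕ) : ℝ :=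
  ∑' B : Finset (Fin d → ℤ), if i ∈ B ∧ ¬ B ⊆ ball i k then |J B| else 0

/-- The telescoped tail-exponential sequence `λ_i(k)`. -/
def lam {d : ℕ} (J : Finset (Fin d → ℤ) → ℝ) (β : ℝ) (i : Fin d → ℤ) : ℕ → ℝ
  | 0 => exp (-2 * β * totalJ J i)
  | 1 => exp (-β * tailJ J i 1) - exp (-2 * β * totalJ J i)
  | (k+2) => exp (-β * tailJ J i (k+2)) - exp (-β * tailJ J i (k+1))

/-- `χ_B(σ) = Π_{j ∈ B} σ(j)`. -/
def chi {d : ℕ} (B : Finset (Fin d → ℤ)) (σ : (Fin d → ℤ) → ℝ) : ℝ :=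
  ∏ j ∈ B, σ j

/-- `Σ_{B ∋ i} J_B χ_B(σ)`. -/
def energy {d : ℕ} (J : Finset (Fin d → ℤ) → ℝ) (i : Fin d → ℤ)
    (σ : (Fin d → ℤ) → ℝ) : ℝ :=
  ∑' B : Finset (Fin d → ℤ), if i ∈ B then J B * chi B σ else 0

/-- `Σ_{B ∋ i, B ⊆ B_i(k)} J_B χ_B(σ)`. -/
def energyIn {d : ℕ} (J : Finset (Fin d → ℤ) → ℝ) (i : Fin d → ℤ) (k : ℕ)
    (σ : (Fin d → ℤ) → ℝ) : ℝ :=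
  ∑' B : Finset (Fin d → ℤ), if i ∈ B ∧ B ⊆ ball i k then J B * chi B σ else 0

/-- `Σ_{B ∋ i, B ⊆ B_i(k)} |J_B|`. -/
def innerAbs {d : ℕ} (J : Finset (Fin d → ℤ) → ℝ) (i : Fin d → ℤ) (k : ℕ) : ℝ :=
  ∑' B : Finset (Fin d → ℤ), if i ∈ B ∧ B ⊆ ball i k then |J B| else 0

/-- `Σ_{B ∋ i, B ⊆ B_i(k), B ⊄ B_i(k-1)} J_B χ_B(σ)`. -/
def shellE {d : ℕ} (J : Finset (Fin d → ℤ) → ℝ) (i : Fin d → ℤ) (k : ℕ)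
    (σ : (Fin d → ℤ) → ℝ) : ℝ :=
  ∑' B : Finset (Fin d → ℤ),
    if i ∈ B ∧ B ⊆ ball i k ∧ ¬ B ⊆ ball i (k - 1) then J B * chi B σ else 0

/-- `Σ_{B ∋ i, B ⊆ B_i(k), B ⊄ B_i(k-1)} |J_B|`. -/
def shellAbs {d : ℕ} (J : Finset (Fin d → ℤ) → ℝ) (i : Fin d → ℤ) (k : ℕ) : ℝ :=
  ∑' B : Finset (Fin d → ℤ),
    if i ∈ B ∧ B ⊆ ball i k ∧ ¬ B ⊆ ball i (k - 1) then |J B| else 0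

/-- `M_i = 2 exp(β Σ_{B ∋ i} |J_B|)`. -/
def bigM {d : ℕ} (J : Finset (Fin d → ℤ) → ℝ) (β : ℝ) (i : Fin d → ℤ) : ℝ :=
  2 * exp (β * totalJ J i)

/-- The spin flip rate `c_i(σ) = exp(-β Σ_{B ∋ i} J_B χ_B(σ))`. -/
def rate {d : ℕ} (J : Finset (Fin d → ℤ) → ℝ) (β : ℝ) (i : Fin d → ℤ)
    (σ : (Fin d → ℤ) → ℝ) : ℝ :=
  exp (-β * energy J i σ)

/-- The truncated flip rate
`c_i^{[ℓ]}(σ) = exp(-β Σ_{B ∋ i, B ⊄ B_i(ℓ)} |J_B|) exp(-β Σ_{B ∋ i, B ⊆ B_i(ℓ)} J_B χ_B(σ))`. -/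
def rateT {d : ℕ} (J : Finset (Fin d → ℤ) → ℝ) (β : ℝ) (i : Fin d → ℤ) (ℓ : ℕ)
    (σ : (Fin d → ℤ) → ℝ) : ℝ :=
  exp (-β * tailJ J i ℓ) * exp (-β * energyIn J i ℓ σ)

/-- The update probabilities `p_i^{[k]}(-σ(i) | σ)`. -/
def updateP {d : ℕ} (J : Finset (Fin d → ℤ) → ℝ) (β : ℝ) (i : Fin d → ℤ)
    (σ : (Fin d → ℤ) → ℝ) : ℕ → ℝ
  | 0 => 1 / 2
  | 1 => (1 / bigM J β i) *
      ((exp (-β * energyIn J i 1 σ) - exp (-β * innerAbs J i 1)) /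
        (1 - exp (-2 * β * innerAbs J i 1) * exp (-β * tailJ J i 1)))
  | (k+2) => (1 / bigM J β i) * exp (-β * energyIn J i (k + 1) σ) *
      ((exp (-β * shellE J i (k + 2) σ) - exp (-β * shellAbs J i (k + 2))) /
        (1 - exp (-β * shellAbs J i (k + 2))))

/-
Write `t_ℓ = Σ_{B ∋ i, B ⊄ B_i(ℓ)} |J_B|` and `E_ℓ = Σ_{B ∋ i, B ⊆ B_i(ℓ)} J_B χ_B(σ)`, so that
the truncated rate is `c^{[ℓ]} = exp(-β (t_ℓ + E_ℓ))`. Passing from `ℓ` to `ℓ + 1` moves a shell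
of interactions from the tail into the energy, and since `|χ_B| = 1` the energy gained is at most
the tail lost; hence `c^{[ℓ]}` is nondecreasing, and by dominated convergence it tends to `c_i(σ)`.
A one-line computation shows `λ_i(k) p_i^{[k]} = (c^{[k]} - c^{[k-1]}) / M_i` (the denominators of
`p_i^{[k]}` are exactly the factors `1 - e^{-β s}` of `λ_i(k)`), and the single-site interactions
vanish, so `c^{[0]} = e^{-β Σ_{B ∋ i} |J_B|} = M_i λ_i(0) / 2`. The decomposition is the
telescoping series of the monotone sequence `c^{[ℓ]}`.
-/

open Real Filter Topology

section TsumIte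

variable {α : Type*} {f : α → ℝ} {p q r : α → Prop}
  [DecidablePred p] [DecidablePred q] [DecidablePred r]

lemma summable_ite_of_imp (hf : Summable fun a => if r a then f a else 0)
    (h : ∀ a, p a → r a) : Summable fun a => if p a then f a else 0 :=
  hf.abs.of_norm_bounded fun a => by
    by_cases hp : p a
    · simp [hp, h a hp]
    · simp [hp]

lemma tsum_ite_eq_add_of_iff (hf : Summable fun a => if r a then f a else 0)
    (h : ∀ a, r a ↔ p a ∨ q a) (hpq : ∀ a, p a → ¬ q a) :
    ∑' a, (if r a then f a else 0) =
      ∑' a, (if p a then f a else 0) + ∑' a, (if q a then f a else 0) := by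
  rw [← (summable_ite_of_imp hf fun a ha => (h a).2 (.inl ha)).tsum_add
    (summable_ite_of_imp hf fun a ha => (h a).2 (.inr ha))]
  refine tsum_congr fun a => ?_
  by_cases hp : p a
  · simp [hp, hpq a hp, (h a).2 (.inl hp)]
  · by_cases hq : q a <;> simp [hp, hq, h a]

end TsumIte

lemma hasSum_sub_of_monotone_of_tendsto {u : ℕ → ℝ} {l : ℝ} (hu : Monotone u)
    (hl : Tendsto u atTop (𝓝 l)) : HasSum (fun n => u (n + 1) - u n) (l - u 0) := by
  refine (hasSum_iff_tendsto_nat_of_nonneg (fun n => sub_nonneg.2 (hu n.le_succ)) _).2 ?_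
  simpa only [Finset.sum_range_sub] using hl.sub_const (u 0)

lemma exp_neg_mul_eq_of_abs_le {β e s : ℝ} (he : |e| ≤ s) (h : exp (-β * s) = 1) :
    exp (-β * e) = exp (-β * s) := by
  rcases mul_eq_zero.1 (exp_eq_one_iff _ |>.1 h) with hβ | hs
  · simp [hβ]
  · subst hs
    rw [abs_nonpos_iff.1 he]

lemma exp_neg_mul_add (β x y : ℝ) : exp (-β * (x + y)) = exp (-β * x) * exp (-β * y) := by
  rw [mul_add, exp_add]

section Ball

variable {d : ℕ} {i j : Fin d → ℤ} {k l : ℕ}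

lemma mem_ball_iff : j ∈ ball i k ↔ ∑ t, |j t - i t| ≤ k := by
  refine ⟨fun h => (Finset.mem_filter.1 h).2, fun h => Finset.mem_filter.2 ⟨?_, h⟩⟩
  have hcoord : ∀ t, |j t - i t| ≤ k := fun t =>
    (Finset.single_le_sum (f := fun t => |j t - i t|) (fun t _ => abs_nonneg _)
      (Finset.mem_univ t)).trans h
  exact Finset.mem_Icc.2 ⟨fun t => by linarith [neg_abs_le (j t - i t), hcoord t],
    fun t => by linarith [le_abs_self (j t - i t), hcoord t]⟩

lemma ball_mono (h : k ≤ l) : ball i k ⊆ ball i l := fun j hj =>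
  mem_ball_iff.2 ((mem_ball_iff.1 hj).trans (by exact_mod_cast h))

lemma eq_of_mem_ball_zero (h : j ∈ ball i 0) : j = i := by
  have hsum := (Finset.sum_eq_zero_iff_of_nonneg fun t _ => abs_nonneg (j t - i t)).1
    (le_antisymm (by exact_mod_cast mem_ball_iff.1 h) (Finset.sum_nonneg fun t _ => abs_nonneg _))
  funext t
  exact sub_eq_zero.1 (abs_eq_zero.1 (hsum t (Finset.mem_univ t)))

lemma eventually_subset_ball (B : Finset (Fin d → ℤ)) : ∀ᶠ ℓ : ℕ in atTop, B ⊆ ball i ℓ := by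
  refine (eventually_all_finset B).2 fun j _ => ?_
  filter_upwards [eventually_ge_atTop (∑ t, |j t - i t|).toNat] with ℓ hℓ
  exact mem_ball_iff.2 ((Int.self_le_toNat _).trans (by exact_mod_cast hℓ))

lemma tendsto_tsum_ite_and_subset_ball {f : Finset (Fin d → ℤ) → ℝ}
    {p : Finset (Fin d → ℤ) → Prop} [DecidablePred p]
    (hf : Summable fun B => if p B then |f B| else 0) :
    Tendsto (fun ℓ : ℕ => ∑' B, if p B ∧ B ⊆ ball i ℓ then f B else 0) atTop
      (𝓝 (∑' B, if p B then f B else 0)) := by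
  refine tendsto_tsum_of_dominated_convergence hf (fun B => ?_) (.of_forall fun ℓ B => ?_)
  · refine tendsto_const_nhds.congr' ?_
    filter_upwards [eventually_subset_ball (i := i) B] with ℓ hℓ
    simp [hℓ]
  · by_cases hp : p B
    · split_ifs <;> simp
    · simp [hp]

end Ball

section Interaction

variable {d : ℕ} {J : Finset (Fin d → ℤ) → ℝ} {β : ℝ} {i : Fin d → ℤ}
  {σ : (Fin d → ℤ) → ℝ}

lemma abs_chi (hσ : ∀ j, σ j = 1 ∨ σ j = -1) (B : Finset (Fin d → ℤ)) : |chi B σ| = 1 := by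
  rw [chi, Finset.abs_prod]
  exact Finset.prod_eq_one fun j _ => by rcases hσ j with h | h <;> simp [h]

lemma abs_tsum_ite_mul_chi_le (hσ : ∀ j, σ j = 1 ∨ σ j = -1)
    {p : Finset (Fin d → ℤ) → Prop} [DecidablePred p]
    (hp : Summable fun B => if p B then |J B| else 0) :
    |∑' B, if p B then J B * chi B σ else 0| ≤ ∑' B, if p B then |J B| else 0 := by
  have hnorm : ∀ B, ‖if p B then J B * chi B σ else 0‖ = if p B then |J B| else 0 := fun B => by
    split_ifs <;> simp [abs_chi hσ]
  exact (norm_tsum_le_tsum_norm (hp.congr fun B => (hnorm B).symm)).trans_eq (tsum_congr hnorm)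

lemma summable_ite_mem_mul_chi (hs : Summable fun B => if i ∈ B then |J B| else 0)
    (hσ : ∀ j, σ j = 1 ∨ σ j = -1) :
    Summable fun B => if i ∈ B then J B * chi B σ else 0 :=
  hs.of_norm_bounded fun B => by split_ifs <;> simp [abs_chi hσ]

variable (hs : Summable fun B => if i ∈ B then |J B| else 0)
include hs

lemma totalJ_eq_innerAbs_add_tailJ (k : ℕ) : totalJ J i = innerAbs J i k + tailJ J i k := by
  unfold totalJ innerAbs tailJ
  exact tsum_ite_eq_add_of_iff hs (fun B => by by_cases h : B ⊆ ball i k <;> simp [h])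
    fun _ hp hq => hq.2 hp.2

lemma tailJ_eq_shellAbs_add_tailJ (k : ℕ) :
    tailJ J i k = shellAbs J i (k + 1) + tailJ J i (k + 1) := by
  refine tsum_ite_eq_add_of_iff (summable_ite_of_imp hs fun _ h => h.1) (fun B => ?_)
    fun _ hp hq => hq.2 hp.2.1
  have hmono : B ⊆ ball i k → B ⊆ ball i (k + 1) := fun h => h.trans (ball_mono k.le_succ)
  simp only [Nat.add_sub_cancel]
  tauto

lemma energyIn_succ (hσ : ∀ j, σ j = 1 ∨ σ j = -1) (k : ℕ) :
    energyIn J i (k + 1) σ = energyIn J i k σ + shellE J i (k + 1) σ := by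
  refine tsum_ite_eq_add_of_iff
    (summable_ite_of_imp (summable_ite_mem_mul_chi hs hσ) fun _ h => h.1)
    (fun B => ?_) fun _ hp hq => hq.2.2 hp.2
  have hmono : B ⊆ ball i k → B ⊆ ball i (k + 1) := fun h => h.trans (ball_mono k.le_succ)
  simp only [Nat.add_sub_cancel]
  tauto

lemma abs_energyIn_le (hσ : ∀ j, σ j = 1 ∨ σ j = -1) (k : ℕ) :
    |energyIn J i k σ| ≤ innerAbs J i k :=
  abs_tsum_ite_mul_chi_le hσ (summable_ite_of_imp hs fun _ h => h.1)

lemma abs_shellE_le (hσ : ∀ j, σ j = 1 ∨ σ j = -1) (k : ℕ) :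
    |shellE J i k σ| ≤ shellAbs J i k :=
  abs_tsum_ite_mul_chi_le hσ (summable_ite_of_imp hs fun _ h => h.1)

lemma tendsto_tailJ : Tendsto (tailJ J i) atTop (𝓝 0) := by
  have hinner : Tendsto (innerAbs J i) atTop (𝓝 (totalJ J i)) :=
    tendsto_tsum_ite_and_subset_ball (by simpa only [abs_abs] using hs)
  have h := (tendsto_const_nhds (x := totalJ J i)).sub hinner
  rw [sub_self] at h
  exact h.congr fun ℓ => by linarith [totalJ_eq_innerAbs_add_tailJ hs ℓ]

lemma tendsto_rateT (hσ : ∀ j, σ j = 1 ∨ σ j = -1) :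
    Tendsto (fun ℓ => rateT J β i ℓ σ) atTop (𝓝 (rate J β i σ)) := by
  have henergy : Tendsto (fun ℓ => energyIn J i ℓ σ) atTop (𝓝 (energy J i σ)) :=
    tendsto_tsum_ite_and_subset_ball (by simpa only [abs_mul, abs_chi hσ, mul_one] using hs)
  simpa [rateT, rate] using
    ((tendsto_tailJ hs).const_mul (-β)).rexp.mul (henergy.const_mul (-β)).rexp

lemma rateT_monotone (hβ : 0 ≤ β) (hσ : ∀ j, σ j = 1 ∨ σ j = -1) :
    Monotone fun ℓ => rateT J β i ℓ σ := by
  refine monotone_nat_of_le_succ fun k => ?_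
  have hshell := (abs_le.1 (abs_shellE_le hs hσ (k + 1))).2
  simp only [rateT, ← exp_add]
  rw [exp_le_exp, tailJ_eq_shellAbs_add_tailJ hs k, energyIn_succ hs hσ k]
  nlinarith

end Interaction

section Decomposition

variable {d : ℕ} {J : Finset (Fin d → ℤ) → ℝ} {β : ℝ} {i : Fin d → ℤ}
  {σ : (Fin d → ℤ) → ℝ}

lemma eq_zero_of_subset_ball_zero (hJ : ∀ B : Finset (Fin d → ℤ), B.card ≤ 1 → J B = 0)
    {B : Finset (Fin d → ℤ)} (h : B ⊆ ball i 0) : J B = 0 :=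
  hJ B <| Finset.card_le_one.2 fun _ ha _ hb =>
    (eq_of_mem_ball_zero (h ha)).trans (eq_of_mem_ball_zero (h hb)).symm

lemma rateT_zero (hJ : ∀ B : Finset (Fin d → ℤ), B.card ≤ 1 → J B = 0) :
    rateT J β i 0 σ = exp (-β * totalJ J i) := by
  have htail : tailJ J i 0 = totalJ J i := tsum_congr fun B => by
    by_cases h : B ⊆ ball i 0
    · simp [h, eq_zero_of_subset_ball_zero hJ h]
    · simp [h]
  have henergy : energyIn J i 0 σ = 0 := (tsum_congr fun B => by
    split_ifs with h
    · rw [eq_zero_of_subset_ball_zero hJ h.2, zero_mul]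
    · rfl).trans tsum_zero
  rw [rateT, htail, henergy, mul_zero, exp_zero, mul_one]

lemma bigM_mul_lam_zero : bigM J β i * (lam J β i 0 * (1 / 2)) = exp (-β * totalJ J i) := by
  rw [bigM, lam, show 2 * exp (β * totalJ J i) * (exp (-2 * β * totalJ J i) * (1 / 2)) =
    exp (β * totalJ J i) * exp (-2 * β * totalJ J i) by ring, ← exp_add]
  ring_nf

variable (hs : Summable fun B => if i ∈ B then |J B| else 0) (hσ : ∀ j, σ j = 1 ∨ σ j = -1)
include hs hσ

lemma lam_one_mul_updateP_one (hJ : ∀ B : Finset (Fin d → ℤ), B.card ≤ 1 → J B = 0) :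
    lam J β i 1 * updateP J β i σ 1 = (rateT J β i 1 σ - rateT J β i 0 σ) / bigM J β i := by
  set A := innerAbs J i 1
  set t := tailJ J i 1
  set E := energyIn J i 1 σ
  have hT : totalJ J i = A + t := totalJ_eq_innerAbs_add_tailJ hs 1
  have hE : |E| ≤ A := abs_energyIn_le hs hσ 1
  have hA : 0 ≤ A := (abs_nonneg E).trans hE
  have ht : 0 ≤ t := tsum_nonneg fun B => by split_ifs <;> simp
  have hcancel : (exp (-β * E) - exp (-β * A)) / (1 - exp (-2 * β * A) * exp (-β * t)) *
      (1 - exp (-2 * β * A) * exp (-β * t)) = exp (-β * E) - exp (-β * A) := by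
    refine div_mul_cancel_of_imp fun h0 => ?_
    have h1 : exp (-β * (2 * A + t)) = 1 := by
      rw [(sub_eq_zero.1 h0).trans (exp_add _ _).symm]; ring_nf
    rw [exp_neg_mul_eq_of_abs_le (hE.trans (by linarith)) h1,
      exp_neg_mul_eq_of_abs_le ((abs_of_nonneg hA).trans_le (by linarith)) h1, sub_self]
  have hlam : exp (-2 * β * totalJ J i) = exp (-β * t) * (exp (-2 * β * A) * exp (-β * t)) := by
    rw [← exp_add, ← exp_add, hT]; ring_nf
  have hr0 : exp (-β * totalJ J i) = exp (-β * t) * exp (-β * A) := by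
    rw [← exp_add, hT]; ring_nf
  rw [lam, updateP, rateT_zero hJ, rateT, hlam, hr0]
  linear_combination exp (-β * t) / bigM J β i * hcancel

lemma lam_add_two_mul_updateP_add_two (k : ℕ) :
    lam J β i (k + 2) * updateP J β i σ (k + 2) =
      (rateT J β i (k + 2) σ - rateT J β i (k + 1) σ) / bigM J β i := by
  set s := shellAbs J i (k + 2)
  set e := shellE J i (k + 2) σ
  have hcancel : (exp (-β * e) - exp (-β * s)) / (1 - exp (-β * s)) * (1 - exp (-β * s)) =
      exp (-β * e) - exp (-β * s) :=
    div_mul_cancel_of_imp fun h0 => by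
      rw [exp_neg_mul_eq_of_abs_le (abs_shellE_le hs hσ (k + 2)) (sub_eq_zero.1 h0).symm, sub_self]
  rw [lam, updateP, rateT, rateT, tailJ_eq_shellAbs_add_tailJ hs (k + 1),
    energyIn_succ hs hσ (k + 1), exp_neg_mul_add, exp_neg_mul_add]
  linear_combination
    exp (-β * tailJ J i (k + 2)) * exp (-β * energyIn J i (k + 1) σ) / bigM J β i * hcancel

lemma lam_succ_mul_updateP_succ (hJ : ∀ B : Finset (Fin d → ℤ), B.card ≤ 1 → J B = 0)
    (k : ℕ) : lam J β i (k + 1) * updateP J β i σ (k + 1) =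
      (rateT J β i (k + 1) σ - rateT J β i k σ) / bigM J β i := by
  cases k with
  | zero => exact lam_one_mul_updateP_one hs hσ hJ
  | succ k => exact lam_add_two_mul_updateP_add_two hs hσ k

end Decomposition

/-- the infinite range spin flip rate admits the decomposition
`c_i(σ) = M_i [λ_i(0)·(1/2) + Σ_{k=1}^∞ λ_i(k) p_i^{[k]}(-σ(i)|σ)]`. -/
theorem rate_decomposition {d : ℕ} (J : Finset (Fin d → ℤ) → ℝ) (β : ℝ)
    (hβ : 0 < β)
    (hJ : ∀ B : Finset (Fin d → ℤ), B.card ≤ 1 → J B = 0)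
    (hsum : ∀ i : Fin d → ℤ,
      Summable (fun B : Finset (Fin d → ℤ) => if i ∈ B then |J B| else 0))
    (σ : (Fin d → ℤ) → ℝ) (hσ : ∀ j, σ j = 1 ∨ σ j = -1)
    (i : Fin d → ℤ) :
    rate J β i σ =
      bigM J β i * (lam J β i 0 * (1 / 2) +
        ∑' k : ℕ, lam J β i (k + 1) * updateP J β i σ (k + 1)) := by
  have hM : bigM J β i ≠ 0 := by unfold bigM; positivity
  have htelescope : HasSum (fun k => lam J β i (k + 1) * updateP J β i σ (k + 1))
      ((rate J β i σ - rateT J β i 0 σ) / bigM J β i) := by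
    simp only [lam_succ_mul_updateP_succ (hsum i) hσ hJ]
    exact (hasSum_sub_of_monotone_of_tendsto (rateT_monotone (hsum i) hβ.le hσ)
      (tendsto_rateT (hsum i) hσ)).div_const _
  rw [htelescope.tsum_eq, mul_add, bigM_mul_lam_zero, ← rateT_zero hJ, mul_div_cancel₀ _ hM]
  ring
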